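/- arXiv:1607.02222 — 3 statements merged into one kernel-verified Lean document; each statement's English description precedes it below -/
import Mathlib

section
/- Let (Y,Φ) be a topological flow admitting a box B, i.e., a compact set B ⊆ Y and a number l > 0 such that the map S × [−l/2, l/2] → Y, (y,t) ↦ Φ_t(y), is a homeomorphism onto B for some compact S ⊆ Y. Suppose there exists ε > 0 so that Φ_t(y) ∉ B for y ∈ S and t with l/2 < |t| < l/2 + ε. If 0 < L < ε/2, then Φ_{[−L,L]}(B) is also a box with central slice S and length l + 2L; i.e., (y,t) ↦ Φ_t(y) is a homeomorphism from S × [−l/2 − L, l/2 + L] onto Φ_{[−L,L]}(B). -/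
theorem stmt10 {Y : Type*} [TopologicalSpace Y] [LocallyCompactSpace Y]
    [TopologicalSpace.MetrizableSpace Y]
    (Φ : ℝ → Y → Y) (hcont : Continuous fun p : ℝ × Y => Φ p.1 p.2)
    (hzero : ∀ y, Φ 0 y = y) (hadd : ∀ s t y, Φ (s + t) y = Φ s (Φ t y))
    (S : Set Y) (hS : IsCompact S) (l ε L : ℝ) (hl : 0 < l) (hε : 0 < ε)
    (hinj : Set.InjOn (fun p : Y × ℝ => Φ p.2 p.1) (S ×ˢ Set.Icc (-(l / 2)) (l / 2)))
    (B : Set Y)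
    (hB : B = (fun p : Y × ℝ => Φ p.2 p.1) '' (S ×ˢ Set.Icc (-(l / 2)) (l / 2)))
    (hout : ∀ y ∈ S, ∀ t : ℝ, l / 2 < |t| → |t| < l / 2 + ε → Φ t y ∉ B)
    (hL : 0 < L) (hLε : L < ε / 2) :
    Set.InjOn (fun p : Y × ℝ => Φ p.2 p.1)
        (S ×ˢ Set.Icc (-(l / 2 + L)) (l / 2 + L)) ∧
      (fun p : Y × ℝ => Φ p.2 p.1) '' (S ×ˢ Set.Icc (-(l / 2 + L)) (l / 2 + L)) =
        Set.image2 (fun t x => Φ t x) (Set.Icc (-L) L) B := by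
  have hcancel : ∀ (t : ℝ) (y z : Y), Φ t y = Φ t z → y = z := by
    intro t y z h
    have h2 := congrArg (Φ (-t)) h
    rwa [← hadd, ← hadd, neg_add_cancel, hzero, hzero] at h2
  have hmem : ∀ y ∈ S, ∀ c : ℝ, -(l/2) ≤ c → c ≤ l/2 → Φ c y ∈ B := by
    intro y hy c hc1 hc2
    rw [hB]; exact ⟨(y, c), ⟨hy, hc1, hc2⟩, rfl⟩
  have key : ∀ y ∈ S, ∀ z ∈ S, ∀ a b : ℝ,
      -(l/2+L) ≤ a → b ≤ l/2+L → Φ a y = Φ b z → ¬ a < b := by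
    intro y hy z hz a b ha hb heq hab
    rcases le_or_gt b (l/2) with hb2 | hb2
    · rcases le_or_gt (-(l/2)) a with ha2 | ha2
      · -- both in the small slab
        have h := hinj (Set.mk_mem_prod hy ⟨ha2, by linarith⟩)
          (Set.mk_mem_prod hz ⟨by linarith, hb2⟩) heq
        have : a = b := congrArg Prod.snd h
        linarith
      · -- a < -(l/2): shift by -(a + l/2)
        have heq' : Φ (-(l/2)) y = Φ (b - (a + l/2)) z := by
          have h2 := congrArg (Φ (-(a + l/2))) heq
          rwa [← hadd, ← hadd, show -(a+l/2)+a = -(l/2) by ring,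
            show -(a+l/2)+b = b - (a+l/2) by ring] at h2
        obtain ⟨c, hcdef⟩ : ∃ c : ℝ, c = b - (a + l/2) := ⟨_, rfl⟩
        rw [← hcdef] at heq'
        have hc1 : -(l/2) < c := by rw [hcdef]; linarith
        have hc2 : c ≤ l/2 + 2*L := by rw [hcdef]; linarith
        rcases le_or_gt c (l/2) with hc3 | hc3
        · have h := hinj (Set.mk_mem_prod hy ⟨le_refl _, by linarith⟩)
            (Set.mk_mem_prod hz ⟨hc1.le, hc3⟩) heq'
          have : -(l/2) = c := congrArg Prod.snd h
          linarith
        · have habs : |c| = c := abs_of_pos (by linarith)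
          exact hout z hz c (by rw [habs]; exact hc3) (by rw [habs]; linarith)
            (heq' ▸ hmem y hy (-(l/2)) (le_refl _) (by linarith))
    · -- b > l/2: shift by -(b - l/2)
      have heq' : Φ (a - (b - l/2)) y = Φ (l/2) z := by
        have h2 := congrArg (Φ (-(b - l/2))) heq
        rwa [← hadd, ← hadd, show -(b-l/2)+a = a - (b - l/2) by ring,
          show -(b-l/2)+b = l/2 by ring] at h2
      obtain ⟨c, hcdef⟩ : ∃ c : ℝ, c = a - (b - l/2) := ⟨_, rfl⟩
      rw [← hcdef] at heq'
      have hc1 : c < l/2 := by rw [hcdef]; linarith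
      have hc2 : -(l/2) - 2*L ≤ c := by rw [hcdef]; linarith
      rcases le_or_gt (-(l/2)) c with hc3 | hc3
      · have h := hinj (Set.mk_mem_prod hy ⟨hc3, hc1.le⟩)
          (Set.mk_mem_prod hz ⟨by linarith, le_refl _⟩) heq'
        have : c = l/2 := congrArg Prod.snd h
        linarith
      · have habs : |c| = -c := abs_of_neg (by linarith)
        exact hout y hy c (by rw [habs]; linarith) (by rw [habs]; linarith)
          (heq'.symm ▸ hmem z hz (l/2) (by linarith) (le_refl _))
  constructor
  · rintro ⟨y, a⟩ ⟨hy, ha1, ha2⟩ ⟨z, b⟩ ⟨hz, hb1, hb2⟩ heq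
    simp only at heq
    rcases lt_trichotomy a b with h | h | h
    · exact absurd h (key y hy z hz a b ha1 hb2 heq)
    · subst h
      exact Prod.ext (hcancel a y z heq) rfl
    · exact absurd h (key z hz y hy b a hb1 ha2 heq.symm)
  · ext w
    constructor
    · rintro ⟨⟨y, s⟩, ⟨hy, hs1, hs2⟩, rfl⟩
      simp only
      set r := max (-(l/2)) (min s (l/2)) with hrdef
      have hr1 : -(l/2) ≤ r := le_max_left _ _
      have hr2 : r ≤ l/2 := max_le (by linarith) (min_le_right _ _)
      have ht : s - r ∈ Set.Icc (-L) L := by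
        constructor
        · -- s - r ≥ -L
          have : r ≤ max (-(l/2)) s := max_le_max (le_refl _) (min_le_left _ _)
          rcases le_or_gt s (-(l/2)) with h | h
          · have : r = -(l/2) := by
              rw [hrdef, min_eq_left (by linarith), max_eq_left h]
            rw [this]; linarith
          · have : r ≤ s := max_le h.le (min_le_left _ _)
            linarith
        · rcases le_or_gt (l/2) s with h | h
          · have : r = l/2 := by
              rw [hrdef, min_eq_right h, max_eq_right (by linarith)]
            rw [this]; linarith
          · have : s ≤ r := le_max_of_le_right (le_min (le_refl _) h.le)
            linarith
      refine ⟨s - r, ht, Φ r y, hmem y hy r hr1 hr2, ?_⟩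
      show Φ (s - r) (Φ r y) = Φ s y
      rw [← hadd, show s - r + r = s by ring]
    · rintro ⟨t, ht, b, hbB, rfl⟩
      rw [hB] at hbB
      obtain ⟨⟨y, r⟩, ⟨hy, hr1, hr2⟩, rfl⟩ := hbB
      simp only [Set.mem_Icc] at ht
      refine ⟨(y, t + r), ⟨hy, by constructor <;> linarith⟩, ?_⟩
      simp only
      rw [hadd]
end

section
/- Let Φ be a topological flow on a locally compact metrizable space Y with finite tube dimension. Then Φ is free, i.e., for every y ∈ Y the map t ↦ Φ_t(y) is injective. -/
/-- A box for a flow `Φ` on `Y`: a compact set of the form `Φ_{[-l/2,l/2]}(S)` for a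
compact central slice `S` and length `l > 0`, on which `(y,t) ↦ Φ_t(y)` is injective
(hence, `Y` being Hausdorff and the domain compact, a homeomorphism onto the box). -/
def IsBox {Y : Type*} [TopologicalSpace Y] (Φ : ℝ → Y → Y) (B : Set Y) : Prop :=
  ∃ (S : Set Y) (l : ℝ), IsCompact S ∧ 0 < l ∧
    Set.InjOn (fun p : Y × ℝ => Φ p.2 p.1) (S ×ˢ Set.Icc (-(l / 2)) (l / 2)) ∧
    (fun p : Y × ℝ => Φ p.2 p.1) '' (S ×ˢ Set.Icc (-(l / 2)) (l / 2)) = B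

theorem stmt11 {Y : Type*} [TopologicalSpace Y] [LocallyCompactSpace Y]
    [TopologicalSpace.MetrizableSpace Y]
    (Φ : ℝ → Y → Y) (hcont : Continuous fun p : ℝ × Y => Φ p.1 p.2)
    (hzero : ∀ y, Φ 0 y = y) (hadd : ∀ s t y, Φ (s + t) y = Φ s (Φ t y))
    (htube : ∃ d : ℕ, ∀ L : ℝ, 0 < L → ∀ K : Set Y, IsCompact K →
      ∃ 𝒰 : Set (Set Y),
        (∀ y ∈ K, ∃ U ∈ 𝒰, (fun t => Φ t y) '' Set.Icc (-L) L ⊆ U) ∧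
        (∀ U ∈ 𝒰, IsOpen U ∧ ∃ B, IsBox Φ B ∧ U ⊆ B) ∧
        (∀ s : Finset (Set Y), ↑s ⊆ 𝒰 → d + 1 < s.card → ⋂₀ (s : Set (Set Y)) = ∅)) :
    ∀ y : Y, Function.Injective fun t : ℝ => Φ t y := by
  intro y
  -- It suffices to show there is no positive period.
  suffices H : ∀ p : ℝ, 0 < p → Φ p y = y → False by
    intro a b hab
    simp only at hab
    by_contra hne
    have key : ∀ a b : ℝ, Φ a y = Φ b y → Φ (b - a) y = y := by
      intro a b h
      have h1 : b - a = -a + b := by ring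
      rw [h1, hadd, ← h, ← hadd]
      simp [hzero]
    rcases lt_or_gt_of_ne hne with h | h
    · exact H (b - a) (by linarith) (key a b hab)
    · exact H (a - b) (by linarith) (key b a hab.symm)
  intro p hp hpy
  obtain ⟨d, hd⟩ := htube
  obtain ⟨𝒰, h1, h2, -⟩ := hd p hp {y} isCompact_singleton
  obtain ⟨U, hU𝒰, hUseg⟩ := h1 y rfl
  obtain ⟨-, B, hB, hUB⟩ := h2 U hU𝒰
  obtain ⟨S, l, hScomp, hl, hinj, himg⟩ := hB
  -- Periodicity facts
  have hnp : Φ (-p) y = y := by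
    calc Φ (-p) y = Φ (-p) (Φ p y) := by rw [hpy]
    _ = Φ (-p + p) y := (hadd _ _ _).symm
    _ = y := by rw [neg_add_cancel]; exact hzero y
  have hkper : ∀ k : ℤ, Φ (k * p) y = y := by
    intro k
    induction k using Int.induction_on with
    | zero => simpa using hzero y
    | succ k ih =>
      have e1 : ((k : ℤ) + 1 : ℤ) * p = p + (k : ℤ) * p := by push_cast; ring
      rw [e1, hadd]
      rw [ih]
      exact hpy
    | pred k ih =>
      have e1 : ((-(k : ℤ) - 1 : ℤ) : ℝ) * p = -p + (-(k : ℤ) : ℤ) * p := by push_cast; ring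
      rw [e1, hadd, ih]
      exact hnp
  have horbit : ∀ τ : ℝ, ∃ r ∈ Set.Icc (-p) p, Φ r y = Φ τ y := by
    intro τ
    set k : ℤ := ⌊τ / p⌋ with hk
    have hb1 : (k : ℝ) * p ≤ τ := (le_div_iff₀ hp).mp (Int.floor_le (τ / p))
    have hb2 : τ < ((k : ℝ) + 1) * p := (div_lt_iff₀ hp).mp (Int.lt_floor_add_one (τ / p))
    refine ⟨τ - k * p, ⟨by nlinarith, by nlinarith⟩, ?_⟩
    conv_rhs => rw [show τ = (τ - k * p) + k * p by ring]
    rw [hadd, hkper]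
  -- every orbit point lies in the box
  have hmemB : ∀ τ : ℝ, Φ τ y ∈
      (fun q : Y × ℝ => Φ q.2 q.1) '' (S ×ˢ Set.Icc (-(l / 2)) (l / 2)) := by
    intro τ
    obtain ⟨r, hr, hre⟩ := horbit τ
    rw [himg]
    exact hre ▸ hUB (hUseg ⟨r, hr, rfl⟩)
  -- set up the box homeomorphism
  set D : Set (Y × ℝ) := S ×ˢ Set.Icc (-(l / 2)) (l / 2) with hDdef
  have hDcomp : IsCompact D := hScomp.prod isCompact_Icc
  haveI : CompactSpace D := isCompact_iff_compactSpace.mp hDcomp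
  set e : D → Y := fun q => Φ (q : Y × ℝ).2 (q : Y × ℝ).1 with hedef
  have hecont : Continuous e := by
    have hc : Continuous fun q : Y × ℝ => Φ q.2 q.1 :=
      hcont.comp (continuous_snd.prodMk continuous_fst)
    exact hc.comp continuous_subtype_val
  have heinj : Function.Injective e := fun q1 q2 h => Subtype.ext (hinj q1.2 q2.2 h)
  have hemb := hecont.isClosedEmbedding heinj
  -- the coordinates of orbit points in the box
  have hch : ∀ τ : ℝ, ∃ q : Y × ℝ, q ∈ D ∧ Φ q.2 q.1 = Φ τ y := by
    intro τ; exact hmemB τ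
  set h' : ℝ → D := fun τ => ⟨(hch τ).choose, (hch τ).choose_spec.1⟩ with hh'def
  have hh : ∀ τ, e (h' τ) = Φ τ y := fun τ => (hch τ).choose_spec.2
  have hh'cont : Continuous h' := by
    rw [hemb.toIsEmbedding.continuous_iff]
    have he : (e ∘ h') = fun τ => Φ τ y := funext hh
    rw [he]
    exact hcont.comp (continuous_id.prodMk continuous_const)
  set t : ℝ → ℝ := fun τ => ((h' τ : Y × ℝ)).2 with htdef
  set s : ℝ → Y := fun τ => ((h' τ : Y × ℝ)).1 with hsdef
  have ht_cont : Continuous t := (continuous_snd.comp continuous_subtype_val).comp hh'cont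
  have hrange : ∀ τ, t τ ∈ Set.Icc (-(l / 2)) (l / 2) := fun τ => (h' τ).2.2
  have hsτ : ∀ τ, Φ (t τ) (s τ) = Φ τ y := fun τ => hh τ
  -- sliding lemma
  have hslide : ∀ τ ε : ℝ, t τ + ε ∈ Set.Icc (-(l / 2)) (l / 2) → t (τ + ε) = t τ + ε := by
    intro τ ε hm
    have hq : ((s τ, t τ + ε) : Y × ℝ) ∈ D := ⟨(h' τ).2.1, hm⟩
    have heq : Φ (t τ + ε) (s τ) = Φ (τ + ε) y := by
      calc Φ (t τ + ε) (s τ) = Φ (ε + t τ) (s τ) := by rw [add_comm]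
      _ = Φ ε (Φ (t τ) (s τ)) := hadd _ _ _
      _ = Φ ε (Φ τ y) := by rw [hsτ]
      _ = Φ (ε + τ) y := (hadd _ _ _).symm
      _ = Φ (τ + ε) y := by rw [add_comm]
    have := hinj (h' (τ + ε)).2 hq ((hh (τ + ε)).trans heq.symm)
    exact congrArg Prod.snd this
  -- the maximum of t on a period
  obtain ⟨τs, hτsmem, hmaxOn⟩ := isCompact_Icc.exists_isMaxOn
    (⟨0, by constructor <;> linarith⟩ : (Set.Icc (-p) p).Nonempty) ht_cont.continuousOn
  have hglobal : ∀ τ, t τ ≤ t τs := by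
    intro τ
    obtain ⟨r, hr, hre⟩ := horbit τ
    have : h' τ = h' r := heinj (by rw [hh, hh, hre])
    have htr : t τ = t r := congrArg (fun q : D => (q : Y × ℝ).2) this
    rw [htr]
    exact hmaxOn hr
  -- the max value is l/2
  have htop : t τs = l / 2 := by
    rcases eq_or_lt_of_le (hrange τs).2 with h | h
    · exact h
    · exfalso
      have hε : 0 < l / 2 - t τs := by linarith
      have hs := hslide τs (l / 2 - t τs) ⟨by linarith, by linarith⟩
      have hg := hglobal (τs + (l / 2 - t τs))
      rw [hs] at hg
      linarith
  -- below the max, t drops below -l/2 + ε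
  have hdown : ∀ ε : ℝ, 0 < ε → t (τs + ε) < ε - l / 2 := by
    intro ε hε
    by_contra hcon
    push_neg at hcon
    have hr2 := (hrange (τs + ε)).2
    have hs := hslide (τs + ε) (-ε) ⟨by linarith, by linarith⟩
    rw [show τs + ε + -ε = τs by ring] at hs
    rw [htop] at hs
    linarith
  -- contradiction with continuity at τs
  have hpos : t τs ∈ Set.Ioi (0 : ℝ) := by rw [htop]; exact by simp; linarith
  have hnh : t ⁻¹' Set.Ioi (0 : ℝ) ∈ nhds τs :=
    ht_cont.continuousAt.preimage_mem_nhds (Ioi_mem_nhds (by rw [htop]; linarith))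
  rw [Metric.mem_nhds_iff] at hnh
  obtain ⟨δ, hδ, hball⟩ := hnh
  set ε : ℝ := min (δ / 2) (l / 2) with hεdef
  have hε : 0 < ε := lt_min (by linarith) (by linarith)
  have hmemball : τs + ε ∈ Metric.ball τs δ := by
    rw [Metric.mem_ball, Real.dist_eq]
    rw [show τs + ε - τs = ε by ring, abs_of_pos hε]
    calc ε ≤ δ / 2 := min_le_left _ _
    _ < δ := by linarith
  have h1 : 0 < t (τs + ε) := hball hmemball
  have h2 := hdown ε hε
  have h3 : ε ≤ l / 2 := min_le_right _ _
  linarith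
end

section
/- Let g : ℝ → ℂ be a bounded continuous function with ∫_ℝ |g(x)|² dx = 1 and supp g such that g(x)·g(x−2r) = 0 and g(x)·g(x+2r) = 0 for all x ∈ ℝ (e.g. g supported in a 2r-separated union of intervals of length < 2r after translation structure). Define p : ℝ → (bounded continuous functions on ℝ) by p(t)(x) = conj(g(x))·g(x−t) for t ∈ [−2r, 2r] and p(t) = 0 otherwise. Then the element p of the twisted convolution algebra C_c(ℝ, C_b(ℝ)) (with product (f*h)(t)(x) = ∫ f(s)(x)·h(t−s)(x−s) ds and adjoint f~(t)(x) = conj(f(−t)(x−t))) satisfies p* = p and p * p = p. -/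
open MeasureTheory

theorem stmt18 (r : ℝ) (hr : 0 < r) (g : ℝ → ℂ) (hg : Continuous g)
    (hnorm : ∫ x : ℝ, ‖g x‖ ^ 2 = 1)
    (horth : ∀ x t : ℝ, 2 * r ≤ |t| → g x * g (x - t) = 0)
    (p : ℝ → ℝ → ℂ)
    (hp : ∀ t x, p t x =
      if |t| ≤ 2 * r then (starRingEnd ℂ) (g x) * g (x - t) else 0) :
    (∀ t x : ℝ, (starRingEnd ℂ) (p (-t) (x - t)) = p t x) ∧
    (∀ t x : ℝ, (∫ s : ℝ, p s x * p (t - s) (x - s)) = p t x) := by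
  have key : ∀ t x : ℝ, p t x = (starRingEnd ℂ) (g x) * g (x - t) := by
    intro t x
    rw [hp]
    split_ifs with h
    · rfl
    · push_neg at h
      have h0 := horth x t h.le
      rcases mul_eq_zero.mp h0 with h1 | h1
      · simp [h1]
      · simp [h1]
  constructor
  · intro t x
    rw [key, key]
    have : x - t - -t = x := by ring
    rw [this, map_mul, RingHomCompTriple.comp_apply, RingHom.id_apply, mul_comm]
  · intro t x
    have hmc : ∀ z : ℂ, z * (starRingEnd ℂ) z = ((‖z‖ ^ 2 : ℝ) : ℂ) := by
      intro z
      rw [Complex.mul_conj, Complex.normSq_eq_norm_sq]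
    have hpt : ∀ s : ℝ, p s x * p (t - s) (x - s) =
        ((starRingEnd ℂ) (g x) * g (x - t)) * ((‖g (x - s)‖ ^ 2 : ℝ) : ℂ) := by
      intro s
      rw [key, key]
      have hx : x - s - (t - s) = x - t := by ring
      rw [hx, ← hmc (g (x - s))]
      ring
    simp only [hpt]
    have hcast : (∫ s : ℝ, ((‖g (x - s)‖ ^ 2 : ℝ) : ℂ)) =
        ((∫ s : ℝ, ‖g (x - s)‖ ^ 2 : ℝ) : ℂ) := integral_ofReal
    rw [integral_const_mul, hcast]
    have hshift : (∫ s : ℝ, ‖g (x - s)‖ ^ 2) = ∫ s : ℝ, ‖g s‖ ^ 2 :=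
      integral_sub_left_eq_self (fun s => ‖g s‖ ^ 2) volume x
    rw [hshift, hnorm, key]
    simp
end
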